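/- arXiv:1007.1207 — 5 statements merged into one kernel-verified Lean document; each statement's English description precedes it below -/
import Mathlib

section
/- In the group algebra ℤ[S_n] (n ≥ 2), the product Ψ_1 Ψ_2 ⋯ Ψ_{n-1} equals the sum of all elements of S_n, where Ψ_1 = 1 + s_1 and Ψ_i = 1 + s_i·Ψ_{i-1} for i ≥ 2. -/
/-! Write `c_{m,k} = s_m s_{m-1} ⋯ s_{k+1}` for `k ≤ m`; it sends `k + 1` to `m + 1`. Unfolding the
recursion gives `Ψ_m = ∑_{k ≤ m} c_{m,k}`. The `c_{m,k}` are representatives of the right cosets of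
`S_m` in `S_{m+1}`: `u ∈ S_{m+1}` lies in `S_m c_{m,k}` for `k + 1 = u⁻¹ (m + 1)`. Hence
`(∑ S_m) Ψ_m = ∑ S_{m+1}`, and the theorem follows by induction on `n`. -/

/-- The symmetric group `S_n`, realized as the permutations of `ℕ` fixing every
point outside the letters `{1, …, n}`. -/
def SsetN (n : ℕ) : Set (Equiv.Perm ℕ) := {w | ∀ x : ℕ, ¬(1 ≤ x ∧ x ≤ n) → w x = x}

/-- `Ψ_i ∈ ℤ[S_n]`: `Ψ_1 = 1 + s_1` and `Ψ_i = 1 + s_i · Ψ_{i-1}`, where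
`s_i = (i, i+1)`. -/
noncomputable def psiA : ℕ → MonoidAlgebra ℤ (Equiv.Perm ℕ)
  | 0 => 1
  | i + 1 =>
      1 + MonoidAlgebra.of ℤ (Equiv.Perm ℕ) (Equiv.swap (i + 1) (i + 2)) * psiA i

open Equiv Finset

section SsetN

variable {n : ℕ} {v w : Perm ℕ}

lemma ssetN_mono : Monotone SsetN :=
  fun _ _ hle _ hw x hx => hw x (by omega)

lemma mul_mem_ssetN (hv : v ∈ SsetN n) (hw : w ∈ SsetN n) : v * w ∈ SsetN n :=
  fun x hx => by rw [Perm.mul_apply, hw x hx, hv x hx]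

lemma inv_mem_ssetN (hw : w ∈ SsetN n) : w⁻¹ ∈ SsetN n :=
  fun x hx => Perm.inv_eq_iff_eq.mpr (hw x hx).symm

lemma ssetN_apply_mem {x : ℕ} (hw : w ∈ SsetN n) (hx : 1 ≤ x ∧ x ≤ n) : 1 ≤ w x ∧ w x ≤ n := by
  by_contra h
  exact h (by rwa [w.injective (hw _ h)])

lemma mem_ssetN_of_apply_eq (hw : w ∈ SsetN (n + 1)) (h : w (n + 1) = n + 1) : w ∈ SsetN n := by
  intro x hx
  by_cases hxn : x = n + 1
  · rwa [hxn]
  · exact hw x (by omega)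

lemma ssetN_eq_singleton_one (hn : n ≤ 1) : SsetN n = {1} := by
  ext w
  refine ⟨fun hw => ?_, by rintro rfl _ _; rfl⟩
  have hfix : ∀ x ≠ 1, w x = x := fun x hx => hw x (by omega)
  ext x
  by_cases hx : x = 1
  · subst hx
    by_contra h
    exact h (w.injective (hfix _ h))
  · exact hfix x hx

lemma ssetN_finite (n : ℕ) : (SsetN n).Finite := by
  refine (Set.finite_range (Perm.ofSubtype : Perm (Set.Icc 1 n) →* Perm ℕ)).subset ?_
  intro w hw
  have hiff : ∀ x, (1 ≤ w x ∧ w x ≤ n) ↔ (1 ≤ x ∧ x ≤ n) := fun x =>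
    ⟨fun hwx => by_contra fun hx => by rw [hw x hx] at hwx; exact hx hwx, ssetN_apply_mem hw⟩
  exact ⟨w.subtypePerm hiff, Perm.ofSubtype_subtypePerm _ fun x hx => by_contra (hx ∘ hw x)⟩

end SsetN

/-- `swapProd m k = s_m s_{m-1} ⋯ s_{k+1}`, the empty product when `m ≤ k`. -/
def swapProd : ℕ → ℕ → Perm ℕ
  | 0, _ => 1
  | m + 1, k => if m + 1 ≤ k then 1 else swap (m + 1) (m + 2) * swapProd m k

lemma swapProd_self (m : ℕ) : swapProd m m = 1 := by
  cases m <;> simp [swapProd]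

lemma swapProd_succ_of_le {m k : ℕ} (h : k ≤ m) :
    swapProd (m + 1) k = swap (m + 1) (m + 2) * swapProd m k :=
  if_neg (by omega)

lemma swapProd_mem_ssetN (m k : ℕ) : swapProd m k ∈ SsetN (m + 1) := by
  induction m with
  | zero => intro x _; rfl
  | succ m ih =>
    intro x hx
    rw [swapProd]
    split_ifs
    · rfl
    · rw [Perm.mul_apply, ih x (by omega), swap_apply_of_ne_of_ne (by omega) (by omega)]

lemma swapProd_apply_succ {m k : ℕ} (h : k ≤ m) : swapProd m k (k + 1) = m + 1 := by
  induction m with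
  | zero => simp [Nat.le_zero.mp h, swapProd]
  | succ m ih =>
    rcases Nat.eq_or_lt_of_le h with rfl | hlt
    · simp [swapProd_self]
    · rw [swapProd_succ_of_le (by omega), Perm.mul_apply, ih (by omega), swap_apply_left]

lemma psiA_eq_sum_swapProd (m : ℕ) :
    psiA m = ∑ k ∈ range (m + 1), MonoidAlgebra.of ℤ (Perm ℕ) (swapProd m k) := by
  induction m with
  | zero => simp [psiA, swapProd, MonoidAlgebra.one_def]
  | succ m ih =>
    rw [psiA, ih, mul_sum, sum_range_succ _ (m + 1), swapProd_self, map_one, add_comm]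
    congr 1
    refine sum_congr rfl fun k hk => ?_
    rw [swapProd_succ_of_le (Nat.lt_succ_iff.mp (mem_range.mp hk)), map_mul]

lemma mul_swapProd_inv_apply {m k : ℕ} {w : Perm ℕ} (hw : w ∈ SsetN m) (hk : k ≤ m) :
    (w * swapProd m k)⁻¹ (m + 1) = k + 1 := by
  rw [mul_inv_rev, Perm.mul_apply, inv_mem_ssetN hw (m + 1) (by omega), Perm.inv_eq_iff_eq,
    swapProd_apply_succ hk]

lemma sum_ssetN_mul_psiA (m : ℕ) :
    (∑ᶠ w ∈ SsetN m, MonoidAlgebra.of ℤ (Perm ℕ) w) * psiA m =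
      ∑ᶠ u ∈ SsetN (m + 1), MonoidAlgebra.of ℤ (Perm ℕ) u := by
  have hfin := ssetN_finite m
  have hfin' := ssetN_finite (m + 1)
  rw [← hfin.coe_toFinset, finsum_mem_coe_finset, ← hfin'.coe_toFinset, finsum_mem_coe_finset,
    psiA_eq_sum_swapProd, sum_mul_sum, ← sum_product']
  let idx (u : Perm ℕ) : ℕ := u⁻¹ (m + 1) - 1
  refine sum_nbij' (fun p => p.1 * swapProd m p.2)
    (fun u => (u * (swapProd m (idx u))⁻¹, idx u)) ?_ ?_ ?_ ?_ fun _ _ => (map_mul ..).symm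
  · rintro ⟨w, k⟩ hp
    simp only [mem_product, hfin.mem_toFinset, mem_range] at hp
    simp only [hfin'.mem_toFinset]
    exact mul_mem_ssetN (ssetN_mono (Nat.le_succ m) hp.1) (swapProd_mem_ssetN m k)
  · intro u hu
    simp only [hfin'.mem_toFinset] at hu
    have hmem := ssetN_apply_mem (inv_mem_ssetN hu) (x := m + 1) (by omega)
    have hidx : idx u + 1 = u⁻¹ (m + 1) := by simp only [idx]; omega
    simp only [mem_product, hfin.mem_toFinset, mem_range]
    refine ⟨mem_ssetN_of_apply_eq (mul_mem_ssetN hu (inv_mem_ssetN (swapProd_mem_ssetN _ _))) ?_,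
      by omega⟩
    rw [Perm.mul_apply, Perm.inv_eq_iff_eq.mpr (swapProd_apply_succ (by omega)).symm, hidx]
    exact u.apply_symm_apply _
  · rintro ⟨w, k⟩ hp
    simp only [mem_product, hfin.mem_toFinset, mem_range] at hp
    have hidx : idx (w * swapProd m k) = k := by
      simp only [idx, mul_swapProd_inv_apply hp.1 (Nat.lt_succ_iff.mp hp.2), Nat.add_sub_cancel]
    simp [hidx]
  · intro u _
    simp

lemma prod_psiA (m : ℕ) :
    ((List.range m).map fun i => psiA (i + 1)).prod =
      ∑ᶠ w ∈ SsetN (m + 1), MonoidAlgebra.of ℤ (Perm ℕ) w := by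
  induction m with
  | zero => simp [ssetN_eq_singleton_one le_rfl, MonoidAlgebra.one_def]
  | succ m ih => rw [List.range_succ, List.map_append, List.prod_append, ih, List.map_singleton,
      List.prod_singleton, sum_ssetN_mul_psiA]

theorem psi_factorization_A_general (n : ℕ) :
    ((List.range (n - 1)).map fun i => psiA (i + 1)).prod =
      ∑ᶠ w ∈ SsetN n, MonoidAlgebra.of ℤ (Equiv.Perm ℕ) w := by
  cases n with
  | zero =>
    rw [ssetN_eq_singleton_one zero_le_one, ← ssetN_eq_singleton_one le_rfl]
    exact prod_psiA 0
  | succ m => exact prod_psiA m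

/-- In `ℤ[S_n]` (`n ≥ 2`), `Ψ_1 Ψ_2 ⋯ Ψ_{n-1}` equals the sum of all elements of `S_n`. -/
theorem psi_factorization_A (n : ℕ) (hn : 2 ≤ n) :
    ((List.range (n - 1)).map fun i => psiA (i + 1)).prod =
      ∑ᶠ w ∈ SsetN n, MonoidAlgebra.of ℤ (Equiv.Perm ℕ) w :=
  psi_factorization_A_general n
end

section
/- The joint generating function of the sorting index and cycle number over S_n factors as ∑_{w ∈ S_n} q^{sor(w)} t^{cyc(w)} = ∏_{i=1}^{n} (t + q + q^2 + ⋯ + q^{i-1}). -/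
/-- The number of cycles of a permutation (including fixed points). -/
def cycA {n : ℕ} (w : Equiv.Perm (Fin n)) : ℕ :=
  w.cycleType.card + (Finset.univ.filter fun x => w x = x).card

/-- `L` is the factorization of `w` as a product of transpositions `(i₁ j₁)⋯(i_k j_k)`
with `i_s < j_s` and `j₁ < j₂ < ⋯ < j_k`. -/
def SortFactA {n : ℕ} (w : Equiv.Perm (Fin n)) (L : List (Fin n × Fin n)) : Prop :=
  (∀ p ∈ L, p.1 < p.2) ∧ List.Chain' (· < ·) (L.map Prod.snd) ∧
    (L.map fun p => Equiv.swap p.1 p.2).prod = w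

/-! Every `w ∈ S_{n+1}` is uniquely `v * (i, n+1)` with `v ∈ S_n` fixing `n+1`. The sorting
factorization of `w` is that of `v` followed by `(i, n+1)` (omitted if `i = n+1`), so
`sor w = sor v + (n+1-i)`. Right multiplication by `(i, n+1)` inserts `n+1` into the cycle of `i`,
so `cyc w = cyc v`, except for `i = n+1`, where `n+1` is a new fixed point. Summing over `i`
contributes the factor `t + q + ⋯ + q^n`. -/

open Equiv Equiv.Perm Finset

namespace Equiv.Perm

variable {α : Type*} [DecidableEq α] [Fintype α]

theorem IsCycle.card_cycleType_swap_mul_add_card_support {c : Perm α} (hc : c.IsCycle) {x : α}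
    (hx : c x ≠ x) :
    Multiset.card (swap x (c x) * c).cycleType + #c.support
      = #(swap x (c x) * c).support + 2 := by
  by_cases hcc : c (c x) = x
  · have hswap : c = swap x (c x) := hc.eq_swap_of_apply_apply_eq_self hx hcc
    rw [← hswap, hswap, swap_mul_self, cycleType_one, support_one, card_support_swap hx.symm]
    rfl
  · have hx' : x ∈ c.support := mem_support.2 hx
    rw [card_cycleType_eq_one.2 (hc.swap_mul hx hcc), support_swap_mul_eq c x hcc,
      card_sdiff_of_subset (singleton_subset_iff.2 hx'), card_singleton]
    have := card_pos.2 ⟨x, hx'⟩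
    omega

theorem card_cycleType_swap_mul_add_card_support (f : Perm α) {x : α} (hx : f x ≠ x) :
    Multiset.card (swap x (f x) * f).cycleType + #f.support
      = Multiset.card f.cycleType + #(swap x (f x) * f).support + 1 := by
  have hc : (f.cycleOf x).IsCycle := isCycle_cycleOf f hx
  -- Only the cycle `c` of `x` is affected: `f = c * ρ` with `ρ` disjoint from `c`.
  have hρc : Disjoint (f * (f.cycleOf x)⁻¹) (f.cycleOf x) :=
    disjoint_mul_inv_of_mem_cycleFactorsFinset <|
      cycleOf_mem_cycleFactorsFinset_iff.2 (mem_support.2 hx)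
  have hcx : f.cycleOf x x = f x := cycleOf_apply_self f x
  generalize f.cycleOf x = c at hc hρc hcx
  generalize hρ : f * c⁻¹ = ρ at hρc
  obtain rfl : f = c * ρ := by rw [← hρc.commute.eq, ← hρ, inv_mul_cancel_right]
  have hsupp : (swap x (c x) * c).support ≤ c.support := by
    refine (support_mul_le _ _).trans (sup_le ?_ le_rfl)
    rw [support_swap (by rwa [hcx, ne_comm]), insert_subset_iff, singleton_subset_iff]
    exact ⟨mem_support.2 (hcx ▸ hx), apply_mem_support.2 (mem_support.2 (hcx ▸ hx))⟩
  have hρ' : Disjoint (swap x (c x) * c) ρ := hρc.symm.mono hsupp le_rfl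
  have key := hc.card_cycleType_swap_mul_add_card_support (hcx ▸ hx)
  rw [← hcx, ← mul_assoc, hρ'.cycleType_mul, hρc.symm.cycleType_mul, hρ'.card_support_mul,
    hρc.symm.card_support_mul, Multiset.card_add, Multiset.card_add, card_cycleType_eq_one.2 hc]
  omega

end Equiv.Perm

namespace Fin

variable {n : ℕ}

def permCastSucc (n : ℕ) : Perm (Fin n) →* Perm (Fin (n + 1)) :=
  extendDomainHom (finSuccAboveEquiv (last n))

theorem permCastSucc_apply (v : Perm (Fin n)) :
    permCastSucc n v = v.extendDomain (finSuccAboveEquiv (last n)) :=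
  rfl

@[simp]
theorem permCastSucc_apply_castSucc (v : Perm (Fin n)) (i : Fin n) :
    permCastSucc n v i.castSucc = (v i).castSucc := by
  have h := extendDomain_apply_image v (finSuccAboveEquiv (last n)) i
  rw [permCastSucc_apply]
  simpa [finSuccAboveEquiv_apply] using h

@[simp]
theorem permCastSucc_apply_last (v : Perm (Fin n)) : permCastSucc n v (last n) = last n :=
  extendDomain_apply_not_subtype _ _ (by simp)

@[simp]
theorem permCastSucc_apply_eq_last_iff (v : Perm (Fin n)) {x : Fin (n + 1)} :
    permCastSucc n v x = last n ↔ x = last n :=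
  (permCastSucc n v).injective.eq_iff' (permCastSucc_apply_last v)

theorem permCastSucc_injective : Function.Injective (permCastSucc n) :=
  extendDomainHom_injective _

theorem permCastSucc_swap (a b : Fin n) :
    permCastSucc n (swap a b) = swap a.castSucc b.castSucc := by
  ext x
  cases x using lastCases with
  | last => rw [permCastSucc_apply_last, swap_apply_of_ne_of_ne (castSucc_lt_last a).ne'
      (castSucc_lt_last b).ne']
  | cast i => rw [permCastSucc_apply_castSucc, castSucc_injective n |>.swap_apply]

theorem bijective_permCastSucc_mul_swap_last :
    Function.Bijective fun p : Perm (Fin n) × Fin (n + 1) =>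
      permCastSucc n p.1 * swap p.2 (last n) := by
  refine (Fintype.bijective_iff_injective_and_card _).2 ⟨?_, ?_⟩
  · rintro ⟨v, i⟩ ⟨v', i'⟩ h
    have hi : i = i' := by
      simpa [swap_apply_eq_iff] using (congrArg (fun w : Perm (Fin (n + 1)) => w i) h).symm
    subst hi
    simpa using permCastSucc_injective (mul_right_cancel h)
  · simp [Fintype.card_perm, Nat.factorial_succ, mul_comm]

noncomputable def permSuccEquiv (n : ℕ) : Perm (Fin n) × Fin (n + 1) ≃ Perm (Fin (n + 1)) :=
  .ofBijective _ bijective_permCastSucc_mul_swap_last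

theorem permSuccEquiv_apply (p : Perm (Fin n) × Fin (n + 1)) :
    permSuccEquiv n p = permCastSucc n p.1 * swap p.2 (last n) :=
  rfl

end Fin

open Fin

section CycleCount

variable {n : ℕ}

theorem cycA_add_card_support (w : Perm (Fin n)) :
    cycA w + #w.support = Multiset.card w.cycleType + n := by
  have : (univ.filter fun x => w x = x) = w.supportᶜ := by ext; simp
  rw [cycA, this, add_assoc, card_compl_add_card, Fintype.card_fin]

theorem cycA_permCastSucc (v : Perm (Fin n)) : cycA (permCastSucc n v) = cycA v + 1 := by
  have h := cycA_add_card_support (permCastSucc n v)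
  have hv := cycA_add_card_support v
  rw [permCastSucc_apply] at h ⊢
  rw [cycleType_extendDomain, card_support_extend_domain] at h
  omega

theorem cycA_swap_mul (w : Perm (Fin n)) {x : Fin n} (hx : w x ≠ x) :
    cycA (swap x (w x) * w) = cycA w + 1 := by
  have h := card_cycleType_swap_mul_add_card_support w hx
  have h₁ := cycA_add_card_support w
  have h₂ := cycA_add_card_support (swap x (w x) * w)
  omega

theorem cycA_permSuccEquiv (v : Perm (Fin n)) (i : Fin (n + 1)) :
    cycA (permSuccEquiv n (v, i)) = cycA v + if i = last n then 1 else 0 := by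
  rw [permSuccEquiv_apply]
  split_ifs with hi
  · rw [hi, swap_self, ← Perm.one_def, mul_one, cycA_permCastSucc]
  · set w := permCastSucc n v * swap i (last n)
    have hw : w (last n) ≠ last n := by simpa [w] using hi
    have hsplit : swap (last n) (w (last n)) * w = permCastSucc n v := by
      simp only [w, Perm.mul_apply, swap_apply_right]
      rw [mul_swap_eq_swap_mul, permCastSucc_apply_last, swap_comm, swap_mul_self_mul]
    have := cycA_swap_mul w hw
    rw [hsplit, cycA_permCastSucc] at this
    omega

end CycleCount

noncomputable def sortingIndex : {n : ℕ} → Perm (Fin n) → ℕ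
  | 0, _ => 0
  | n + 1, w => sortingIndex ((permSuccEquiv n).symm w).1 + (n - ((permSuccEquiv n).symm w).2)

theorem sortingIndex_permSuccEquiv {n : ℕ} (v : Perm (Fin n)) (i : Fin (n + 1)) :
    sortingIndex (permSuccEquiv n (v, i)) = sortingIndex v + (n - i) := by
  rw [sortingIndex, Equiv.symm_apply_apply]

namespace SortFactA

variable {n : ℕ} {w : Perm (Fin n)} {L : List (Fin n × Fin n)}

theorem permCastSucc (h : SortFactA w L) :
    SortFactA (permCastSucc n w) (L.map (Prod.map castSucc castSucc)) := by
  obtain ⟨hlt, hchain, hprod⟩ := h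
  refine ⟨?_, ?_, ?_⟩
  · simp only [List.mem_map, forall_exists_index, and_imp]
    rintro _ p hp rfl
    exact castSucc_lt_castSucc_iff.2 (hlt p hp)
  · change List.IsChain _ _
    rw [List.map_map, List.isChain_map]
    exact (List.isChain_map Prod.snd).1 hchain |>.imp fun _ _ => castSucc_lt_castSucc_iff.2
  · rw [← hprod, map_list_prod, List.map_map, List.map_map]
    exact congrArg List.prod (List.map_congr_left fun p _ => (permCastSucc_swap p.1 p.2).symm)

theorem mul_swap {i j : Fin n} (h : SortFactA w L) (hij : i < j) (hL : ∀ p ∈ L, p.2 < j) :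
    SortFactA (w * swap i j) (L ++ [(i, j)]) := by
  obtain ⟨hlt, hchain, hprod⟩ := h
  refine ⟨?_, ?_, by simp [hprod]⟩
  · intro p hp
    rcases List.mem_append.1 hp with hp | hp
    exacts [hlt p hp, List.mem_singleton.1 hp ▸ hij]
  · change List.IsChain _ _
    rw [List.map_append]
    refine hchain.append (List.isChain_singleton _) fun x hx y hy => ?_
    obtain ⟨p, hp, rfl⟩ := List.mem_map.1 (List.mem_of_getLast? hx)
    simp only [List.map_cons, List.map_nil, List.head?_cons, Option.mem_some_iff] at hy
    exact hy ▸ hL p hp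

end SortFactA

theorem exists_sortFactA_sum_eq_sortingIndex {n : ℕ} (w : Perm (Fin n)) :
    ∃ L, SortFactA w L ∧ (L.map fun p => (p.2 : ℕ) - (p.1 : ℕ)).sum = sortingIndex w := by
  induction n with
  | zero => exact ⟨[], ⟨by simp, List.isChain_nil, Subsingleton.elim _ _⟩, rfl⟩
  | succ n ih =>
    obtain ⟨⟨v, i⟩, rfl⟩ := (permSuccEquiv n).surjective w
    obtain ⟨L, hL, hsum⟩ := ih v
    rw [sortingIndex_permSuccEquiv, permSuccEquiv_apply]
    rcases (le_last i).lt_or_eq with hi | rfl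
    · refine ⟨_, hL.permCastSucc.mul_swap hi fun p hp => ?_, ?_⟩
      · obtain ⟨p, -, rfl⟩ := List.mem_map.1 hp
        exact castSucc_lt_last _
      simp [← hsum, Function.comp_def]
    · rw [swap_self, ← Perm.one_def, mul_one]
      refine ⟨_, hL.permCastSucc, ?_⟩
      simp [← hsum, Function.comp_def]

section GeneratingFunction

variable {R : Type*} [CommSemiring R] (q t : R)

theorem sum_fin_pow_sub_mul_pow_ite (n : ℕ) :
    ∑ i : Fin (n + 1), q ^ (n - i : ℕ) * t ^ (if i = last n then 1 else 0)
      = t + ∑ j ∈ Icc 1 n, q ^ j := by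
  simp only [sum_univ_castSucc, (castSucc_lt_last _).ne, if_false, if_true, val_castSucc, val_last,
    Nat.sub_self, pow_zero, pow_one, one_mul, mul_one, add_comm t]
  rw [Fin.sum_univ_eq_sum_range (fun i => q ^ (n - i)) n]
  congr 1
  refine sum_nbij' (fun i => n - i) (fun j => n - j) ?_ ?_ ?_ ?_ fun _ _ => rfl <;>
    intro i hi <;> simp only [mem_range, mem_Icc] at hi ⊢ <;> omega

theorem sum_pow_sortingIndex_mul_pow_cycA (n : ℕ) :
    ∑ w : Perm (Fin n), q ^ sortingIndex w * t ^ cycA w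
      = ∏ i ∈ range n, (t + ∑ j ∈ Icc 1 i, q ^ j) := by
  induction n with
  | zero => simp [sortingIndex, cycA]
  | succ n ih =>
    rw [← (permSuccEquiv n).sum_comp, Fintype.sum_prod_type, prod_range_succ, ← ih, sum_mul]
    refine sum_congr rfl fun v _ => ?_
    simp only [sortingIndex_permSuccEquiv, cycA_permSuccEquiv, ← sum_fin_pow_sub_mul_pow_ite,
      mul_sum, pow_add]
    exact sum_congr rfl fun _ _ => by ring

end GeneratingFunction

/-- If `sor` is the sorting index, i.e. `sor w = ∑_s (j_s - i_s)` for the unique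
factorization `w = t_{i₁ j₁}⋯t_{i_k j_k}` with `i_s < j_s`, `j₁ < ⋯ < j_k`, then
`∑_{w ∈ S_n} q^{sor w} t^{cyc w} = ∏_{i=1}^{n} (t + q + q² + ⋯ + q^{i-1})`. -/
theorem sor_cyc_generating_function {R : Type} [CommRing R] (n : ℕ) (q t : R)
    (sor : Equiv.Perm (Fin n) → ℕ)
    (hsor : ∀ w L, SortFactA w L → sor w = (L.map fun p => (p.2 : ℕ) - (p.1 : ℕ)).sum) :
    ∑ w : Equiv.Perm (Fin n), q ^ sor w * t ^ cycA w =
      ∏ i ∈ Finset.range n, (t + ∑ j ∈ Finset.Icc 1 i, q ^ j) := by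
  have hsor_eq : ∀ w, sor w = sortingIndex w := fun w => by
    obtain ⟨L, hL, hsum⟩ := exists_sortFactA_sum_eq_sortingIndex w
    rw [hsor w L hL, hsum]
  simp only [hsor_eq, sum_pow_sortingIndex_mul_pow_cycA]
end

section
/- The pairs of statistics (inv, m) and (sor, cyc) are equidistributed over S_n: ∑_{w ∈ S_n} q^{inv(w)} t^{m(w)} = ∑_{w ∈ S_n} q^{sor(w)} t^{cyc(w)}. In particular, sor is Mahonian and m has the Stirling distribution. -/
/-!
Both pairs are pushed to the same pair of statistics `(∑ b_j, #{j | b_j = 0})` on subexcedant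
sequences `b = (b₀, …, b_{n-1})`, `0 ≤ b_j ≤ j`, by bijections (injective maps between sets of
`n!` elements).

For `(inv, m)` the map is the Lehmer code read from right to left: `b_j` is the number of later
entries smaller than the entry in position `n - 1 - j`, and its zeros are the right-to-left minima.

For `(sor, cyc)`, `b` goes to the product of the transpositions `(j - b_j, j)`, `b_j ≠ 0`, in
increasing order of `j`; this is a sorting factorization of cost `∑ b_j`, and it is the only one
(its last factor is `(w⁻¹ j, j)` for the largest `j` moved by `w`). Multiplying a permutation on
the right by `(i j)`, where it fixes `j`, inserts `j` into the cycle of `i`; so each factor lowers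
the number of cycles by one and `cyc = n - #{j | b_j ≠ 0}`.
-/

/-- The number of inversions of `w`: pairs `i < j` with `w i > w j`. -/
def invA {n : ℕ} (w : Equiv.Perm (Fin n)) : ℕ :=
  (Finset.univ.filter fun p : Fin n × Fin n => p.1 < p.2 ∧ w p.2 < w p.1).card

/-- The number of positions of `w` that are right-to-left minima. -/
def mA {n : ℕ} (w : Equiv.Perm (Fin n)) : ℕ :=
  (Finset.univ.filter fun i : Fin n => ∀ j : Fin n, i < j → w i < w j).card

open Equiv Finset
open scoped Nat

namespace Equiv.Perm

theorem SameCycle.of_forall_sameCycle_apply {α : Type*} {f g : Perm α}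
    (h : ∀ x, f.SameCycle x (g x)) {x y : α} (hxy : g.SameCycle x y) : f.SameCycle x y := by
  obtain ⟨k, rfl⟩ := hxy
  induction k using Int.induction_on with
  | zero => exact SameCycle.refl _ _
  | succ k ih => rw [add_comm, zpow_add, zpow_one, mul_apply]; exact ih.trans (h _)
  | pred k ih =>
    rw [sub_eq_neg_add, zpow_add, zpow_neg_one, mul_apply]
    refine ih.trans ?_
    simpa using (h (g⁻¹ ((g ^ (-(k : ℤ))) x))).symm

variable {α : Type*} [DecidableEq α]

theorem IsCycle.mul_swap {c : Perm α} (hc : c.IsCycle) {i j : α} (hi : c i ≠ i) (hj : c j = j) :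
    (c * swap i j).IsCycle := by
  set f := c * swap i j
  have hij : i ≠ j := by rintro rfl; exact hi hj
  have hfi : f i = j := by simp [f, hj]
  have hfj : f j = c i := by simp [f]
  -- `f` runs through the cycle of `c`, visiting `j` between `i` and `c i`
  have hsc : ∀ x, f.SameCycle x (c x) := by
    intro x
    by_cases hxi : x = i
    · subst hxi; exact ⟨2, by simp [pow_two, hfi, hfj]⟩
    by_cases hxj : x = j
    · subst hxj; rw [hj]
    · exact ⟨1, by simp [f, swap_apply_of_ne_of_ne hxi hxj]⟩
  refine ⟨i, by rw [hfi]; exact hij.symm, fun y hy => ?_⟩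
  by_cases hyi : y = i
  · rw [hyi]
  by_cases hyj : y = j
  · exact ⟨1, by simp [hyj, hfi]⟩
  refine SameCycle.of_forall_sameCycle_apply hsc (hc.sameCycle hi ?_)
  simpa [f, swap_apply_of_ne_of_ne hyi hyj] using hy

variable [Fintype α]

theorem support_mul_swap_of_apply_eq_self {σ : Perm α} {i j : α} (hi : σ i ≠ i)
    (hj : σ j = j) : (σ * swap i j).support = insert j σ.support := by
  have hij : i ≠ j := by rintro rfl; exact hi hj
  have hσi : σ i ≠ j := fun h => hij (σ.injective (h.trans hj.symm))
  ext x
  by_cases hxi : x = i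
  · subst hxi; simp [hi, hj, hij.symm]
  by_cases hxj : x = j
  · subst hxj; simp [hσi]
  simp [swap_apply_of_ne_of_ne hxi hxj, hxj]

theorem card_parts_partition_mul_swap {σ : Perm α} {i j : α} (hij : i ≠ j) (hj : σ j = j) :
    (σ * swap i j).partition.parts.card + 1 = σ.partition.parts.card := by
  suffices (σ * swap i j).cycleType.card + 1 + #σ.support
      = σ.cycleType.card + #(σ * swap i j).support by
    have := card_le_univ (σ * swap i j).support
    have := card_le_univ σ.support
    simp only [parts_partition, Multiset.card_add, Multiset.card_replicate]
    omega
  by_cases hi : σ i = i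
  · have hd : σ.Disjoint (swap i j) := fun x => by
      by_cases hx : x = i ∨ x = j
      · rcases hx with rfl | rfl <;> simp [hi, hj]
      · push Not at hx; exact Or.inr (swap_apply_of_ne_of_ne hx.1 hx.2)
    rw [hd.cycleType_mul, hd.card_support_mul, card_support_swap hij, Multiset.card_add,
      card_cycleType_eq_one.mpr (isCycle_swap hij)]
    omega
  -- split off the cycle `c` through `i`; then `σ * swap i j = d * (c * swap i j)` with `d` disjoint
  set c := σ.cycleOf i
  set d := σ * c⁻¹
  have hc : c.IsCycle := isCycle_cycleOf σ hi
  have hci : c i ≠ i := by simpa [c] using hi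
  have hcj : c j = j := by simp [c, cycleOf_apply, hj]
  have hdc : d.Disjoint c := disjoint_mul_inv_of_mem_cycleFactorsFinset
    (cycleOf_mem_cycleFactorsFinset_iff.mpr (mem_support.mpr hi))
  have hσ : σ = d * c := by simp [d]
  have hdc' : d.Disjoint (c * swap i j) := by
    rw [disjoint_iff_disjoint_support, support_mul_swap_of_apply_eq_self hci hcj,
      disjoint_insert_right]
    refine ⟨fun hjd => ?_, disjoint_iff_disjoint_support.mp hdc⟩
    have : j ∈ σ.support := by rw [hσ, hdc.support_mul]; exact mem_union_left _ hjd
    exact mem_support.mp this hj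
  rw [hσ, mul_assoc, hdc'.cycleType_mul, hdc'.card_support_mul, hdc.cycleType_mul,
    hdc.card_support_mul, support_mul_swap_of_apply_eq_self hci hcj,
    card_insert_of_notMem (fun h => mem_support.mp h hcj), Multiset.card_add, Multiset.card_add,
    card_cycleType_eq_one.mpr hc, card_cycleType_eq_one.mpr (hc.mul_swap hci hcj)]
  omega

end Equiv.Perm

theorem List.prod_map_swap_apply_of_forall_ne {α : Type*} [DecidableEq α] {L : List (α × α)}
    {x : α} (h : ∀ p ∈ L, p.1 ≠ x ∧ p.2 ≠ x) : (L.map fun p => Equiv.swap p.1 p.2).prod x = x := by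
  induction L with
  | nil => rfl
  | cons p L ih =>
    simp only [List.forall_mem_cons] at h
    rw [List.map_cons, List.prod_cons, Perm.mul_apply, ih h.2,
      swap_apply_of_ne_of_ne h.1.1.symm h.1.2.symm]

theorem Finset.strictMonoOn_card_filter_lt_notMem {α : Type*} [Fintype α] [LinearOrder α]
    (U : Finset α) : StrictMonoOn (fun v => #{u | u < v ∧ u ∉ U}) (↑U)ᶜ := by
  intro v hv v' _ hvv'
  refine card_lt_card ((ssubset_iff_of_subset fun u hu => ?_).mpr ⟨v, ?_, ?_⟩)
  · simp only [mem_filter, mem_univ, true_and] at hu ⊢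
    exact ⟨hu.1.trans hvv', hu.2⟩
  · simpa [hvv'] using hv
  · simp

variable {n : ℕ}

theorem cycA_eq_card_parts_partition (w : Perm (Fin n)) : cycA w = w.partition.parts.card := by
  rw [cycA, Perm.parts_partition, Multiset.card_add, Multiset.card_replicate, ← card_compl,
    Perm.support, compl_filter]
  simp only [not_not]

theorem cycA_one : cycA (1 : Perm (Fin n)) = n := by simp [cycA]

section SortingFactorization

variable {w : Perm (Fin n)} {L : List (Fin n × Fin n)}

theorem sortFactA_iff_pairwise :
    SortFactA w L ↔ (∀ p ∈ L, p.1 < p.2) ∧ (L.map Prod.snd).Pairwise (· < ·) ∧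
      (L.map fun p => swap p.1 p.2).prod = w := by
  rw [← List.isChain_iff_pairwise]
  rfl

theorem sortFactA_nil_iff : SortFactA w [] ↔ w = 1 := by
  simp [sortFactA_iff_pairwise, eq_comm]

theorem sortFactA_append_singleton_iff {p : Fin n × Fin n} :
    SortFactA w (L ++ [p]) ↔ p.1 < p.2 ∧ (∀ q ∈ L, q.2 < p.2) ∧ SortFactA (w * swap p.1 p.2) L := by
  simp only [sortFactA_iff_pairwise, List.map_append, List.pairwise_append,
    List.forall_mem_append, List.prod_append, List.map_cons, List.map_nil,
    List.prod_singleton, ← eq_mul_inv_iff_mul_eq, swap_inv, List.mem_singleton, forall_eq,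
    List.pairwise_singleton, true_and, List.forall_mem_map]
  tauto

theorem SortFactA.apply_eq_self (h : SortFactA w L) {x : Fin n} (hx : ∀ p ∈ L, p.2 < x) :
    w x = x :=
  h.2.2 ▸ List.prod_map_swap_apply_of_forall_ne fun p hp =>
    ⟨((h.1 p hp).trans (hx p hp)).ne, (hx p hp).ne⟩

theorem SortFactA.cycA_add_length (h : SortFactA w L) : cycA w + L.length = n := by
  induction L using List.reverseRecOn generalizing w with
  | nil => rw [sortFactA_nil_iff.mp h, cycA_one, List.length_nil, add_zero]
  | append_singleton L p ih =>
    obtain ⟨hp, hL, h'⟩ := sortFactA_append_singleton_iff.mp h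
    have := (w * swap p.1 p.2).card_parts_partition_mul_swap hp.ne (h'.apply_eq_self hL)
    rw [mul_swap_mul_self, ← cycA_eq_card_parts_partition, ← cycA_eq_card_parts_partition] at this
    have := ih h'
    rw [List.length_append, List.length_singleton]
    omega

theorem SortFactA.apply_of_append_singleton {p : Fin n × Fin n} (h : SortFactA w (L ++ [p])) :
    w p.1 = p.2 ∧ ∀ x, p.2 < x → w x = x := by
  obtain ⟨hp, hL, h'⟩ := sortFactA_append_singleton_iff.mp h
  refine ⟨by simpa using h'.apply_eq_self hL, fun x hx => h.apply_eq_self fun q hq => ?_⟩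
  rcases List.mem_append.mp hq with hq | hq
  · exact (hL q hq).trans hx
  · rwa [List.mem_singleton.mp hq]

theorem SortFactA.ne_one_of_append_singleton {p : Fin n × Fin n} (h : SortFactA w (L ++ [p])) :
    w ≠ 1 := by
  rintro rfl
  exact (sortFactA_append_singleton_iff.mp h).1.ne h.apply_of_append_singleton.1

theorem SortFactA.snd_le_of_append_singleton {L' : List (Fin n × Fin n)} {p p' : Fin n × Fin n}
    (h : SortFactA w (L ++ [p])) (h' : SortFactA w (L' ++ [p'])) : p'.2 ≤ p.2 := by
  by_contra! hlt
  have := w.injective ((h.apply_of_append_singleton.2 _ hlt).trans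
    h'.apply_of_append_singleton.1.symm)
  exact (sortFactA_append_singleton_iff.mp h').1.ne this.symm

theorem SortFactA.unique {L' : List (Fin n × Fin n)} (h : SortFactA w L) (h' : SortFactA w L') :
    L = L' := by
  induction L using List.reverseRecOn generalizing w L' with
  | nil =>
    obtain rfl | ⟨M', p', rfl⟩ := L'.eq_nil_or_concat'
    · rfl
    · exact absurd (sortFactA_nil_iff.mp h) h'.ne_one_of_append_singleton
  | append_singleton M p ih =>
    obtain rfl | ⟨M', p', rfl⟩ := L'.eq_nil_or_concat'
    · exact absurd (sortFactA_nil_iff.mp h') h.ne_one_of_append_singleton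
    have h2 : p.2 = p'.2 :=
      le_antisymm (h'.snd_le_of_append_singleton h) (h.snd_le_of_append_singleton h')
    have h1 : p.1 = p'.1 := w.injective <| by
      rw [h.apply_of_append_singleton.1, h'.apply_of_append_singleton.1, h2]
    obtain rfl : p = p' := Prod.ext h1 h2
    rw [ih (sortFactA_append_singleton_iff.mp h).2.2 (sortFactA_append_singleton_iff.mp h').2.2]

end SortingFactorization

abbrev SubexcedantSeq (n : ℕ) : Type := ∀ j : Fin n, Fin (j + 1)

namespace SubexcedantSeq

theorem card_eq_factorial : Fintype.card (SubexcedantSeq n) = n ! := by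
  simp [Fin.prod_univ_eq_prod_range (· + 1), prod_range_add_one_eq_factorial]

def transpositions (b : SubexcedantSeq n) : List (Fin n × Fin n) :=
  ((List.finRange n).filter fun j => (b j : ℕ) ≠ 0).map fun j =>
    (⟨j - b j, lt_of_le_of_lt (Nat.sub_le _ _) j.isLt⟩, j)

def toPerm (b : SubexcedantSeq n) : Perm (Fin n) :=
  (b.transpositions.map fun p => swap p.1 p.2).prod

variable (b : SubexcedantSeq n)

theorem mem_transpositions {p : Fin n × Fin n} :
    p ∈ b.transpositions ↔ (b p.2 : ℕ) ≠ 0 ∧ (p.1 : ℕ) = p.2 - b p.2 := by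
  obtain ⟨i, j⟩ := p
  simp only [transpositions, List.mem_map, List.mem_filter, List.mem_finRange, true_and,
    Prod.mk.injEq, decide_eq_true_eq]
  constructor
  · rintro ⟨j, hj, rfl, rfl⟩; exact ⟨hj, rfl⟩
  · rintro ⟨hj, hi⟩; exact ⟨j, hj, Fin.ext hi.symm, rfl⟩

theorem sortFactA_toPerm : SortFactA b.toPerm b.transpositions := by
  refine sortFactA_iff_pairwise.mpr ⟨fun p hp => ?_, ?_, rfl⟩
  · have := (b.mem_transpositions).mp hp
    have := (b p.2).isLt
    rw [Fin.lt_def]; omega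
  · rw [transpositions, List.map_map]
    exact ((List.pairwise_lt_finRange n).filter _).map _ fun _ _ h => h

theorem transpositions_injective : Function.Injective (transpositions (n := n)) := by
  intro b b' h
  have hagree : ∀ {b b' : SubexcedantSeq n}, b.transpositions = b'.transpositions →
      ∀ j, (b j : ℕ) ≠ 0 → b j = b' j := by
    intro b b' h j hj
    have hmem := (b'.mem_transpositions (p := (⟨j - b j, by omega⟩, j))).mp
      (h ▸ (b.mem_transpositions).mpr ⟨hj, rfl⟩)
    have := (b j).isLt; have := (b' j).isLt
    ext; simp only at hmem; omega
  funext j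
  by_cases hj : (b j : ℕ) = 0
  · by_cases hj' : (b' j : ℕ) = 0
    · exact Fin.ext (hj.trans hj'.symm)
    · exact (hagree h.symm j hj').symm
  · exact hagree h j hj

theorem toPerm_injective : Function.Injective (toPerm (n := n)) := fun b b' h =>
  transpositions_injective ((sortFactA_toPerm b).unique (h ▸ sortFactA_toPerm b'))

theorem sum_map_transpositions :
    (b.transpositions.map fun p => (p.2 : ℕ) - p.1).sum = ∑ j, (b j : ℕ) := by
  have hsub : ∀ j : Fin n, (j : ℕ) - (j - b j) = b j := fun j =>
    Nat.sub_sub_self (Nat.lt_succ_iff.mp (b j).isLt)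
  rw [← sum_filter_ne_zero, transpositions, List.map_map]
  simp only [Function.comp_def, hsub]
  -- a sum over a filter of `univ : Finset (Fin n)` is by definition one over `List.finRange n`
  rfl

theorem cycA_toPerm : cycA b.toPerm = #{j | (b j : ℕ) = 0} := by
  have h := (sortFactA_toPerm b).cycA_add_length
  have hlen : b.transpositions.length = #{j | (b j : ℕ) ≠ 0} := List.length_map _
  have := card_filter_add_card_filter_not (s := univ) fun j => (b j : ℕ) = 0
  rw [card_univ, Fintype.card_fin] at this
  simp only [ne_eq] at hlen
  omega

end SubexcedantSeq

theorem sum_sor_cycA_eq {M : Type*} [AddCommMonoid M] (f : ℕ → ℕ → M)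
    (sor : Perm (Fin n) → ℕ)
    (hsor : ∀ w L, SortFactA w L → sor w = (L.map fun p => (p.2 : ℕ) - (p.1 : ℕ)).sum) :
    ∑ w, f (sor w) (cycA w) = ∑ b : SubexcedantSeq n, f (∑ j, (b j : ℕ)) #{j | (b j : ℕ) = 0} := by
  have hbij : Function.Bijective (SubexcedantSeq.toPerm (n := n)) :=
    (Fintype.bijective_iff_injective_and_card _).mpr ⟨SubexcedantSeq.toPerm_injective, by
      rw [SubexcedantSeq.card_eq_factorial, Fintype.card_perm, Fintype.card_fin]⟩
  refine (Fintype.sum_bijective _ hbij _ _ fun b => ?_).symm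
  rw [hsor _ _ b.sortFactA_toPerm, b.sum_map_transpositions, b.cycA_toPerm]

namespace Equiv.Perm

def lehmer (w : Perm (Fin n)) (i : Fin n) : ℕ := #{k | i < k ∧ w k < w i}

variable (w : Perm (Fin n))

theorem sum_lehmer : ∑ i, w.lehmer i = invA w := by
  simp only [invA, lehmer, card_filter, Fintype.sum_prod_type]

theorem card_lehmer_eq_zero : #{i | w.lehmer i = 0} = mA w := by
  refine congrArg card (filter_congr fun i _ => ?_)
  simp only [lehmer, card_eq_zero, filter_eq_empty_iff, mem_univ, true_implies, not_and, not_lt]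
  refine forall_congr' fun j => imp_congr_right fun hij => ?_
  exact ⟨fun h => h.lt_of_ne (w.injective.ne hij.ne), le_of_lt⟩

theorem lehmer_lt (i : Fin n) : w.lehmer i < n - i := by
  have : w.lehmer i ≤ #(Ioi i) := card_le_card fun k hk => by simp_all
  rw [Fin.card_Ioi] at this
  omega

theorem lehmer_eq_card_filter_lt_notMem (i : Fin n) :
    w.lehmer i = #{v | v < w i ∧ v ∉ (Iio i).image w} := by
  refine card_nbij' w w.symm (fun k hk => ?_) (fun v hv => ?_) (fun k _ => w.symm_apply_apply k)
    (fun v _ => w.apply_symm_apply v)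
  · simp only [coe_filter, mem_univ, true_and, Set.mem_ofPred_eq, mem_image, mem_Iio, not_exists,
      not_and] at hk ⊢
    exact ⟨hk.2, fun x hx hxk => (hx.trans hk.1).ne (w.injective hxk)⟩
  · simp only [coe_filter, mem_univ, true_and, Set.mem_ofPred_eq, mem_image, mem_Iio, not_exists,
      not_and, apply_symm_apply] at hv ⊢
    refine ⟨lt_of_le_of_ne (not_lt.mp fun h => hv.2 _ h (w.apply_symm_apply v)) fun h => ?_, hv.1⟩
    rw [h, apply_symm_apply] at hv
    exact hv.1.false

theorem lehmer_injective : Function.Injective (lehmer (n := n)) := by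
  intro w w' h
  ext1 i
  -- `w i` is the value outside `w '' Iio i` with exactly `lehmer w i` smaller such values
  induction i using WellFoundedLT.induction with
  | ind i ih =>
  have hU : (Iio i).image w = (Iio i).image w' := image_congr fun k hk => ih k (mem_Iio.mp hk)
  have hnot : ∀ u : Perm (Fin n), u i ∉ (Iio i).image u := fun u hu => by
    obtain ⟨k, hk, hki⟩ := mem_image.mp hu
    exact (mem_Iio.mp hk).ne (u.injective hki)
  refine (strictMonoOn_card_filter_lt_notMem ((Iio i).image w)).injOn (hnot w) (hU ▸ hnot w') ?_
  rw [← lehmer_eq_card_filter_lt_notMem, hU, ← lehmer_eq_card_filter_lt_notMem, h]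

def lehmerCode : SubexcedantSeq n := fun j =>
  ⟨w.lehmer j.rev, by have := w.lehmer_lt j.rev; rw [Fin.val_rev] at this; omega⟩

theorem lehmerCode_injective : Function.Injective (lehmerCode (n := n)) := by
  intro w w' h
  refine lehmer_injective (funext fun i => ?_)
  simpa [lehmerCode] using congrArg (fun b => (b i.rev : ℕ)) h

end Equiv.Perm

theorem sum_invA_mA_eq {M : Type*} [AddCommMonoid M] (f : ℕ → ℕ → M) :
    ∑ w : Perm (Fin n), f (invA w) (mA w) =
      ∑ b : SubexcedantSeq n, f (∑ j, (b j : ℕ)) #{j | (b j : ℕ) = 0} := by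
  have hbij : Function.Bijective (Perm.lehmerCode (n := n)) :=
    (Fintype.bijective_iff_injective_and_card _).mpr ⟨Perm.lehmerCode_injective, by
      rw [SubexcedantSeq.card_eq_factorial, Fintype.card_perm, Fintype.card_fin]⟩
  refine Fintype.sum_bijective _ hbij _ _ fun w => ?_
  have hsum : ∑ j, (w.lehmerCode j : ℕ) = invA w :=
    (Equiv.sum_comp Fin.revPerm w.lehmer).trans w.sum_lehmer
  have hzero : #{j | (w.lehmerCode j : ℕ) = 0} = mA w := by
    rw [← w.card_lehmer_eq_zero, card_filter, card_filter]
    exact Equiv.sum_comp Fin.revPerm fun i => if w.lehmer i = 0 then 1 else 0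
  rw [hsum, hzero]

/-- The pairs `(inv, m)` and `(sor, cyc)` are equidistributed over `S_n`, where `sor` is
the sorting index: `sor w = ∑_s (j_s - i_s)` for the unique factorization
`w = t_{i₁ j₁}⋯t_{i_k j_k}` with `i_s < j_s`, `j₁ < ⋯ < j_k`. -/
theorem inv_m_sor_cyc_equidistributed {R : Type} [CommRing R] (n : ℕ) (q t : R)
    (sor : Equiv.Perm (Fin n) → ℕ)
    (hsor : ∀ w L, SortFactA w L → sor w = (L.map fun p => (p.2 : ℕ) - (p.1 : ℕ)).sum) :
    ∑ w : Equiv.Perm (Fin n), q ^ invA w * t ^ mA w =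
      ∑ w : Equiv.Perm (Fin n), q ^ sor w * t ^ cycA w := by
  let weight : ℕ → ℕ → R := fun a b => q ^ a * t ^ b
  exact (sum_invA_mA_eq weight).trans (sum_sor_cycA_eq weight sor hsor).symm
end

section
/- The sorting index is Mahonian: ∑_{w ∈ S_n} q^{sor(w)} = (1+q)(1+q+q^2)⋯(1+q+⋯+q^{n-1}) = ∑_{w ∈ S_n} q^{inv(w)}. -/
/-!
Both statistics are peeled off one letter at a time. Let `Bₘ` (`permsBelow n m`) be the
permutations fixing every point `≥ m`. Every `w ∈ Bₘ₊₁` is uniquely `u * (i m)` with `u ∈ Bₘ` and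
`i ≤ m`; appending `(i, m)` to the sorting factorization of `u` gives that of `w`, so
`sor w = sor u + (m - i)`. Likewise every `w ∈ Bₘ₊₁` is uniquely `c * u` with `u ∈ Bₘ` and `c` the
cycle `(v v+1 ⋯ m)`, `v = w m`; since `c` is increasing away from `m`, `w` has the inversions of
`u` plus the `m - v` inversions ending at `m`. Either way `∑_{Bₘ₊₁} q^s = [m+1]_q ∑_{Bₘ} q^s`, and
`Bₙ` is all of `Sₙ`.
-/

open Finset Equiv

variable {n : ℕ}

def permsBelow (n m : ℕ) : Finset (Perm (Fin n)) :=
  {w | ∀ k : Fin n, m ≤ k → w k = k}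

section permsBelow

variable {m : ℕ} {w u : Perm (Fin n)}

@[simp]
lemma mem_permsBelow : w ∈ permsBelow n m ↔ ∀ k : Fin n, m ≤ k → w k = k := by
  simp [permsBelow]

lemma permsBelow_zero : permsBelow n 0 = {1} := by
  ext w
  simp [Perm.ext_iff]

lemma permsBelow_of_le (h : n ≤ m) : permsBelow n m = univ :=
  eq_univ_of_forall fun w => mem_permsBelow.2 fun k hk => absurd k.isLt (by omega)

lemma permsBelow_mono {m' : ℕ} (h : m ≤ m') : permsBelow n m ⊆ permsBelow n m' :=
  fun _ hw => mem_permsBelow.2 fun k hk => mem_permsBelow.1 hw k (h.trans hk)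

lemma mul_mem_permsBelow (hw : w ∈ permsBelow n m) (hu : u ∈ permsBelow n m) :
    w * u ∈ permsBelow n m := by
  simp_all

lemma inv_mem_permsBelow (hw : w ∈ permsBelow n m) : w⁻¹ ∈ permsBelow n m :=
  mem_permsBelow.2 fun k hk => Perm.inv_eq_iff_eq.2 (mem_permsBelow.1 hw k hk).symm

lemma swap_mem_permsBelow {a b : Fin n} (ha : (a : ℕ) < m) (hb : (b : ℕ) < m) :
    swap a b ∈ permsBelow n m :=
  mem_permsBelow.2 fun k hk =>
    swap_apply_of_ne_of_ne (by rintro rfl; omega) (by rintro rfl; omega)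

lemma val_apply_lt_of_mem_permsBelow (hw : w ∈ permsBelow n m) {a : Fin n}
    (ha : (a : ℕ) < m) : (w a : ℕ) < m := by
  by_contra! h
  have : w a = a := w.injective (mem_permsBelow.1 hw _ h)
  omega

lemma mem_permsBelow_iff_succ {M : Fin n} :
    w ∈ permsBelow n M ↔ w ∈ permsBelow n (M + 1) ∧ w M = M := by
  refine ⟨fun hw => ⟨permsBelow_mono (Nat.le_succ _) hw, mem_permsBelow.1 hw M le_rfl⟩, ?_⟩
  rintro ⟨hw, hM⟩
  refine mem_permsBelow.2 fun k hk => ?_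
  rcases hk.lt_or_eq with hk | hk
  · exact mem_permsBelow.1 hw k hk
  · rwa [Fin.ext hk.symm]

lemma apply_le_of_mem_permsBelow_succ {M : Fin n} (hw : w ∈ permsBelow n (M + 1)) : w M ≤ M :=
  Nat.lt_succ_iff.1 (val_apply_lt_of_mem_permsBelow hw (Nat.lt_succ_self _))

lemma mul_swap_inv_apply_mem_permsBelow {M : Fin n} (hw : w ∈ permsBelow n (M + 1)) :
    w * swap (w⁻¹ M) M ∈ permsBelow n M := by
  have hi : (w⁻¹ M : ℕ) < M + 1 :=
    Nat.lt_succ_of_le (apply_le_of_mem_permsBelow_succ (inv_mem_permsBelow hw))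
  refine mem_permsBelow_iff_succ.2
    ⟨mul_mem_permsBelow hw (swap_mem_permsBelow hi M.val.lt_succ_self), ?_⟩
  simp

end permsBelow

section generatingFunction

variable {R : Type} [CommRing R]

lemma sum_Iic_pow_sub (q : R) (M : Fin n) :
    ∑ i ∈ Iic M, q ^ ((M : ℕ) - i) = ∑ j ∈ range (M + 1), q ^ j := by
  refine sum_nbij' (fun i => M - i) (fun j => ⟨M - j, by omega⟩) ?_ ?_ ?_ ?_ fun _ _ => rfl <;>
    simp only [mem_Iic, mem_range, Fin.le_def, Fin.ext_iff] <;> omega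

lemma sum_pow_permsBelow_succ_of_bij (s : Perm (Fin n) → ℕ) (q : R) (M : Fin n)
    (g : Fin n × Perm (Fin n) → Perm (Fin n)) (f : Perm (Fin n) → Fin n × Perm (Fin n))
    (hg : ∀ p ∈ Iic M ×ˢ permsBelow n M, g p ∈ permsBelow n (M + 1))
    (hf : ∀ w ∈ permsBelow n (M + 1), f w ∈ Iic M ×ˢ permsBelow n M)
    (hfg : ∀ p ∈ Iic M ×ˢ permsBelow n M, f (g p) = p)
    (hgf : ∀ w ∈ permsBelow n (M + 1), g (f w) = w)
    (hs : ∀ p ∈ Iic M ×ˢ permsBelow n M, s (g p) = (M - p.1 : ℕ) + s p.2) :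
    ∑ w ∈ permsBelow n (M + 1), q ^ s w =
      (∑ j ∈ range (M + 1), q ^ j) * ∑ w ∈ permsBelow n M, q ^ s w := by
  rw [← sum_Iic_pow_sub, sum_mul_sum, ← sum_product',
    ← sum_nbij' g f hg hf hfg hgf fun p hp => by rw [hs p hp, pow_add]]

lemma sum_pow_eq_prod_of_succ (s : Perm (Fin n) → ℕ) (q : R) (h1 : s 1 = 0)
    (hsucc : ∀ M : Fin n, ∑ w ∈ permsBelow n (M + 1), q ^ s w =
      (∑ j ∈ range (M + 1), q ^ j) * ∑ w ∈ permsBelow n M, q ^ s w) :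
    ∑ w, q ^ s w = ∏ i ∈ range n, ∑ j ∈ range (i + 1), q ^ j := by
  suffices h : ∀ m ≤ n, ∑ w ∈ permsBelow n m, q ^ s w =
      ∏ i ∈ range m, ∑ j ∈ range (i + 1), q ^ j by
    rw [← h n le_rfl, permsBelow_of_le le_rfl]
  intro m hm
  induction m with
  | zero => simp [permsBelow_zero, h1]
  | succ m ih =>
    rw [prod_range_succ, ← ih (by omega), mul_comm, ← hsucc ⟨m, by omega⟩]

end generatingFunction

section sortingIndex

lemma SortFactA.mul_swap_s8 {w : Perm (Fin n)} {L : List (Fin n × Fin n)} (hL : SortFactA w L)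
    {i j : Fin n} (hij : i < j) (hLj : ∀ p ∈ L, p.2 < j) :
    SortFactA (w * swap i j) (L ++ [(i, j)]) := by
  obtain ⟨hlt, hchain, hprod⟩ := hL
  refine ⟨?_, ?_, by simp [hprod]⟩
  · simp only [List.mem_append, List.mem_singleton]
    rintro p (hp | rfl)
    exacts [hlt p hp, hij]
  · rw [List.map_append]
    refine hchain.append (by simp) fun x hx y hy => ?_
    obtain rfl : y = j := by simpa using hy.symm
    obtain ⟨p, hp, rfl⟩ := List.mem_map.1 (List.mem_of_mem_getLast? hx)
    exact hLj p hp

lemma exists_sortFactA_of_mem_permsBelow {m : ℕ} {w : Perm (Fin n)}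
    (hw : w ∈ permsBelow n m) : ∃ L, SortFactA w L ∧ ∀ p ∈ L, (p.2 : ℕ) < m := by
  induction m generalizing w with
  | zero =>
    obtain rfl : w = 1 := by simpa [permsBelow_zero] using hw
    exact ⟨[], ⟨by simp, List.isChain_nil, rfl⟩, by simp⟩
  | succ m ih =>
    have weaken : ∀ {v : Perm (Fin n)}, v ∈ permsBelow n m →
        ∃ L, SortFactA v L ∧ ∀ p ∈ L, (p.2 : ℕ) < m + 1 := fun hv =>
      (ih hv).imp fun L ⟨hL, hLm⟩ => ⟨hL, fun p hp => (hLm p hp).trans m.lt_succ_self⟩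
    by_cases hm : n ≤ m
    · exact weaken (by simp [permsBelow_of_le hm])
    set M : Fin n := ⟨m, by omega⟩
    change w ∈ permsBelow n (M + 1) at hw
    by_cases hwM : w M = M
    · exact weaken (mem_permsBelow_iff_succ.2 ⟨hw, hwM⟩)
    have hi : w⁻¹ M < M := (apply_le_of_mem_permsBelow_succ (inv_mem_permsBelow hw)).lt_of_ne
      fun h => hwM (by simpa using congrArg w h.symm)
    obtain ⟨L, hL, hLM⟩ := ih (mul_swap_inv_apply_mem_permsBelow hw)
    refine ⟨L ++ [(w⁻¹ M, M)], by simpa [mul_assoc] using hL.mul_swap_s8 hi hLM, ?_⟩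
    simp only [List.mem_append, List.mem_singleton]
    rintro p (hp | rfl)
    exacts [(hLM p hp).trans m.lt_succ_self, m.lt_succ_self]

def IsSortingIndex (sor : Perm (Fin n) → ℕ) : Prop :=
  ∀ w L, SortFactA w L → sor w = (L.map fun p => (p.2 : ℕ) - (p.1 : ℕ)).sum

variable {sor : Perm (Fin n) → ℕ}

lemma IsSortingIndex.map_one (hsor : IsSortingIndex sor) : sor 1 = 0 := by
  simpa using hsor 1 [] ⟨by simp, List.isChain_nil, rfl⟩

lemma IsSortingIndex.map_mul_swap (hsor : IsSortingIndex sor) {M i : Fin n} {u : Perm (Fin n)}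
    (hu : u ∈ permsBelow n M) (hi : i ≤ M) :
    sor (u * swap i M) = (M - i : ℕ) + sor u := by
  obtain ⟨L, hL, hLM⟩ := exists_sortFactA_of_mem_permsBelow hu
  rcases hi.lt_or_eq with hi | rfl
  · rw [hsor _ _ (hL.mul_swap_s8 hi hLM), hsor u L hL]
    simp [add_comm]
  · simp [← Perm.one_def]

lemma IsSortingIndex.sum_pow_permsBelow_succ (hsor : IsSortingIndex sor) {R : Type} [CommRing R]
    (q : R) (M : Fin n) :
    ∑ w ∈ permsBelow n (M + 1), q ^ sor w =
      (∑ j ∈ range (M + 1), q ^ j) * ∑ w ∈ permsBelow n M, q ^ sor w := by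
  refine sum_pow_permsBelow_succ_of_bij sor q M (fun p => p.2 * swap p.1 M)
    (fun w => (w⁻¹ M, w * swap (w⁻¹ M) M)) ?_ ?_ ?_ ?_ ?_
  · simp only [mem_product, mem_Iic, and_imp, Prod.forall]
    exact fun i u hi hu => mul_mem_permsBelow (permsBelow_mono M.val.le_succ hu)
      (swap_mem_permsBelow (Nat.lt_succ_of_le hi) M.val.lt_succ_self)
  · simp only [mem_product, mem_Iic]
    exact fun w hw => ⟨apply_le_of_mem_permsBelow_succ (inv_mem_permsBelow hw),
      mul_swap_inv_apply_mem_permsBelow hw⟩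
  · simp only [mem_product, and_imp, Prod.forall, mul_inv_rev, swap_inv, Perm.mul_apply]
    intro i u _ hu
    have hM : u⁻¹ M = M := mem_permsBelow.1 (inv_mem_permsBelow hu) M le_rfl
    simp [hM, mul_assoc]
  · simp [mul_assoc]
  · simp only [mem_product, mem_Iic, and_imp, Prod.forall]
    exact fun i u hi hu => hsor.map_mul_swap hu hi

end sortingIndex

section inversions

variable {u : Perm (Fin n)} {v M : Fin n}

def invAt (w : Perm (Fin n)) (b : Fin n) : ℕ :=
  #{a | a < b ∧ w b < w a}

lemma invA_eq_sum_invAt (w : Perm (Fin n)) : invA w = ∑ b, invAt w b := by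
  simp only [invA, invAt, card_filter, Fintype.sum_prod_type_right]

lemma invA_one : invA (1 : Perm (Fin n)) = 0 := by
  rw [invA, card_eq_zero, filter_eq_empty_iff]
  exact fun p _ h => lt_asymm h.1 h.2

lemma val_cycleIcc (hvM : v ≤ M) (x : Fin n) :
    (Fin.cycleIcc v M x : ℕ) =
      if x < v ∨ M < x then (x : ℕ) else if x = M then (v : ℕ) else (x : ℕ) + 1 := by
  have := M.neZero
  rcases lt_or_ge x v with hx | hvx
  · simp [Fin.cycleIcc_of_lt hx, hx]
  rcases lt_or_ge M x with hx | hxM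
  · simp [Fin.cycleIcc_of_gt hx, hx]
  rcases hxM.lt_or_eq with hx | rfl
  · simp [Fin.cycleIcc_of_ge_of_lt hvx hx, hx.ne, hvx.not_gt, hxM.not_gt,
      Fin.val_add_one_of_lt' (lt_of_lt_of_le (Nat.succ_lt_succ hx) M.isLt)]
  · simp [Fin.cycleIcc_of_last hvM, hvx.not_gt]

lemma cycleIcc_lt_cycleIcc_iff (hvM : v ≤ M) {x y : Fin n} (hx : x ≠ M) (hy : y ≠ M) :
    Fin.cycleIcc v M x < Fin.cycleIcc v M y ↔ x < y := by
  rw [Fin.lt_def, Fin.lt_def, val_cycleIcc hvM, val_cycleIcc hvM]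
  simp only [Fin.lt_def, Fin.le_def, Fin.ext_iff, Ne] at *
  split_ifs <;> omega

lemma cycleIcc_mem_permsBelow_succ : Fin.cycleIcc v M ∈ permsBelow n (M + 1) :=
  mem_permsBelow.2 fun _ hk => Fin.cycleIcc_of_gt hk

lemma invAt_self_of_mem_permsBelow (hu : u ∈ permsBelow n M) : invAt u M = 0 := by
  rw [invAt, card_eq_zero, filter_eq_empty_iff]
  rintro a - ⟨ha, hua⟩
  rw [mem_permsBelow.1 hu M le_rfl] at hua
  exact (val_apply_lt_of_mem_permsBelow hu ha).not_gt hua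

lemma invAt_cycleIcc_mul_of_ne (hvM : v ≤ M) (hu : u ∈ permsBelow n M) {b : Fin n}
    (hb : b ≠ M) :
    invAt (Fin.cycleIcc v M * u) b = invAt u b := by
  have := M.neZero
  have huM : u M = M := mem_permsBelow.1 hu M le_rfl
  have hne : ∀ {a}, a ≠ M → u a ≠ M := fun ha h => ha (u.injective (h.trans huM.symm))
  simp only [invAt, Perm.mul_apply]
  refine congrArg card (filter_congr fun a _ => and_congr_right fun hab => ?_)
  by_cases haM : a = M
  · subst haM
    rw [huM, mem_permsBelow.1 hu b hab.le, Fin.cycleIcc_of_gt hab, Fin.cycleIcc_of_last hvM]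
    exact iff_of_false (hvM.trans hab.le).not_gt hab.le.not_gt
  · exact cycleIcc_lt_cycleIcc_iff hvM (hne hb) (hne haM)

lemma invAt_cycleIcc_mul_self (hvM : v ≤ M) (hu : u ∈ permsBelow n M) :
    invAt (Fin.cycleIcc v M * u) M = M - v := by
  have := M.neZero
  have hlt_iff : ∀ y : Fin n, y < M → (v < Fin.cycleIcc v M y ↔ v ≤ y) := fun y hy => by
    rw [Fin.lt_def, val_cycleIcc hvM]
    simp only [Fin.lt_def, Fin.le_def, Fin.ext_iff] at *
    split_ifs <;> omega
  rw [invAt, Perm.mul_apply, mem_permsBelow.1 hu M le_rfl, Fin.cycleIcc_of_last hvM,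
    ← Fin.card_Ico]
  refine card_bij' (fun a _ => u a) (fun x _ => u⁻¹ x) (fun a ha => ?_) (fun x hx => ?_)
    (by simp) (by simp)
  · rw [mem_filter, Perm.mul_apply] at ha
    have hua : u a < M := val_apply_lt_of_mem_permsBelow hu ha.2.1
    exact mem_Ico.2 ⟨(hlt_iff _ hua).1 ha.2.2, hua⟩
  · rw [mem_Ico] at hx
    have hux : u⁻¹ x < M := val_apply_lt_of_mem_permsBelow (inv_mem_permsBelow hu) hx.2
    refine mem_filter.2 ⟨mem_univ _, hux, ?_⟩
    simpa using (hlt_iff x hx.2).2 hx.1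

lemma invA_cycleIcc_mul (hvM : v ≤ M) (hu : u ∈ permsBelow n M) :
    invA (Fin.cycleIcc v M * u) = (M - v : ℕ) + invA u := by
  rw [invA_eq_sum_invAt, invA_eq_sum_invAt, ← add_sum_erase _ _ (mem_univ M),
    ← add_sum_erase _ _ (mem_univ M), invAt_cycleIcc_mul_self hvM hu,
    invAt_self_of_mem_permsBelow hu, zero_add]
  exact congrArg _ <|
    sum_congr rfl fun b hb => invAt_cycleIcc_mul_of_ne hvM hu (ne_of_mem_erase hb)

lemma sum_pow_invA_permsBelow_succ {R : Type} [CommRing R] (q : R) (M : Fin n) :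
    ∑ w ∈ permsBelow n (M + 1), q ^ invA w =
      (∑ j ∈ range (M + 1), q ^ j) * ∑ w ∈ permsBelow n M, q ^ invA w := by
  refine sum_pow_permsBelow_succ_of_bij invA q M (fun p => Fin.cycleIcc p.1 M * p.2)
    (fun w => (w M, (Fin.cycleIcc (w M) M)⁻¹ * w)) ?_ ?_ ?_ ?_ ?_
  · simp only [mem_product, mem_Iic, and_imp, Prod.forall]
    exact fun v u _ hu =>
      mul_mem_permsBelow cycleIcc_mem_permsBelow_succ (permsBelow_mono M.val.le_succ hu)
  · simp only [mem_product, mem_Iic]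
    refine fun w hw => ⟨apply_le_of_mem_permsBelow_succ hw, mem_permsBelow_iff_succ.2
      ⟨mul_mem_permsBelow (inv_mem_permsBelow cycleIcc_mem_permsBelow_succ) hw, ?_⟩⟩
    have := M.neZero
    rw [Perm.mul_apply, Perm.inv_eq_iff_eq,
      Fin.cycleIcc_of_last (apply_le_of_mem_permsBelow_succ hw)]
  · simp only [mem_product, mem_Iic, and_imp, Prod.forall]
    intro v u hvM hu
    have := M.neZero
    simp [mem_permsBelow.1 hu M le_rfl, Fin.cycleIcc_of_last hvM]
  · simp
  · simp only [mem_product, mem_Iic, and_imp, Prod.forall]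
    exact fun v u hvM hu => invA_cycleIcc_mul hvM hu

end inversions

/-- The sorting index is Mahonian:
`∑_{w ∈ S_n} q^{sor w} = (1+q)(1+q+q²)⋯(1+q+⋯+q^{n-1}) = ∑_{w ∈ S_n} q^{inv w}`. -/
theorem sor_is_Mahonian {R : Type} [CommRing R] (n : ℕ) (q : R)
    (sor : Equiv.Perm (Fin n) → ℕ)
    (hsor : ∀ w L, SortFactA w L → sor w = (L.map fun p => (p.2 : ℕ) - (p.1 : ℕ)).sum) :
    (∑ w : Equiv.Perm (Fin n), q ^ sor w =
        ∏ i ∈ Finset.range n, ∑ j ∈ Finset.range (i + 1), q ^ j) ∧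
      ∑ w : Equiv.Perm (Fin n), q ^ sor w = ∑ w : Equiv.Perm (Fin n), q ^ invA w := by
  replace hsor : IsSortingIndex sor := hsor
  have hsor_gf := sum_pow_eq_prod_of_succ sor q hsor.map_one (hsor.sum_pow_permsBelow_succ q)
  have hinv_gf :=
    sum_pow_eq_prod_of_succ (n := n) invA q invA_one (sum_pow_invA_permsBelow_succ q)
  exact ⟨hsor_gf, hsor_gf.trans hinv_gf.symm⟩
end

section
/- In the group algebra ℤ[B_n] (n ≥ 1), the product Φ_1 Φ_2 ⋯ Φ_n equals the sum of all elements of B_n, where Φ_j = 1 + ∑_{−j ≤ i < j} t_{ij}. -/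
/-- The signed transposition `t_{ij}` of `ℤ`, exchanging `i ↔ j` and `-i ↔ -j`
(when `i = -j` this is the sign change negating `j`). -/
def bt (i j : ℤ) : Equiv.Perm ℤ :=
  if i = -j then Equiv.swap i j else Equiv.swap i j * Equiv.swap (-i) (-j)

/-- `w` is a signed permutation in the hyperoctahedral group `B_n`. -/
def IsSignedPerm (n : ℕ) (w : Equiv.Perm ℤ) : Prop :=
  (∀ x : ℤ, w (-x) = -w x) ∧ ∀ x : ℤ, (n : ℤ) < |x| → w x = x

/-- `Φ_j = 1 + ∑_{-j ≤ i < j, i ≠ 0} t_{ij} ∈ ℤ[B_n]`. -/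
noncomputable def phiB (j : ℕ) : MonoidAlgebra ℤ (Equiv.Perm ℤ) :=
  1 + ∑ i ∈ (Finset.Icc (-(j : ℤ)) ((j : ℤ) - 1)).erase 0,
      MonoidAlgebra.of ℤ (Equiv.Perm ℤ) (bt i (j : ℤ))

/-!
Every `v ∈ B_{n+1}` factors uniquely as `v = w * t_{k,n+1}` with `w ∈ B_n` and
`k = v⁻¹ (n+1) ∈ [-(n+1), n+1] \ {0}`, since `w = v * t_{k,n+1}` fixes `n+1`. As
`t_{n+1,n+1} = 1`, these `t_{k,n+1}` are exactly the terms of `Φ_{n+1}`, so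
`∑ B_{n+1} = (∑ B_n) * Φ_{n+1}`, and the theorem follows by induction from `B_0 = 1`.
-/

section bt

variable {k m : ℤ}

theorem bt_apply (hk : k ≠ 0) (hm : m ≠ 0) (x : ℤ) :
    bt k m x = if x = k then m else if x = m then k else if x = -k then -m
      else if x = -m then -k else x := by
  unfold bt
  split_ifs <;> simp only [Equiv.Perm.mul_apply, Equiv.swap_apply_def] <;> split_ifs <;> omega

theorem bt_self (hm : m ≠ 0) : bt m m = 1 := by
  ext x; rw [bt_apply hm hm]; split_ifs <;> simp_all

theorem bt_apply_right (hk : k ≠ 0) (hm : m ≠ 0) : bt k m m = k := by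
  rw [bt_apply hk hm]; split_ifs <;> omega

theorem bt_apply_left (hk : k ≠ 0) (hm : m ≠ 0) : bt k m k = m := by
  rw [bt_apply hk hm, if_pos rfl]

theorem bt_mul_self (hk : k ≠ 0) (hm : m ≠ 0) : bt k m * bt k m = 1 := by
  ext x; simp only [Equiv.Perm.mul_apply, bt_apply hk hm, Equiv.Perm.one_apply]
  split_ifs <;> omega

theorem isSignedPerm_bt {n : ℕ} (hk : k ≠ 0) (hm : m ≠ 0) (hkn : |k| ≤ n) (hmn : |m| ≤ n) :
    IsSignedPerm n (bt k m) := by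
  rw [abs_le] at hkn hmn
  refine ⟨fun x => ?_, fun x hx => ?_⟩ <;> simp only [bt_apply hk hm]
  · split_ifs <;> omega
  · rw [lt_abs] at hx; split_ifs <;> omega

end bt

theorem IsSignedPerm.abs_apply_le_iff {n : ℕ} {w : Equiv.Perm ℤ} (hw : IsSignedPerm n w)
    {x : ℤ} : |w x| ≤ n ↔ |x| ≤ n := by
  constructor
  · intro h; by_contra! hx; rw [hw.2 x hx] at h; omega
  · intro h; by_contra! hx; rw [w.injective (hw.2 _ hx)] at hx; omega

theorem IsSignedPerm.apply_zero {n : ℕ} {w : Equiv.Perm ℤ} (hw : IsSignedPerm n w) :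
    w 0 = 0 := by
  have := hw.1 0; rw [neg_zero] at this; omega

theorem IsSignedPerm.mono {n n' : ℕ} (h : n ≤ n') {w : Equiv.Perm ℤ} (hw : IsSignedPerm n w) :
    IsSignedPerm n' w :=
  ⟨hw.1, fun x hx => hw.2 x (lt_of_le_of_lt (by exact_mod_cast h) hx)⟩

theorem IsSignedPerm.of_succ {n : ℕ} {w : Equiv.Perm ℤ} (hw : IsSignedPerm (n + 1) w)
    (hfix : w (n + 1) = n + 1) : IsSignedPerm n w := by
  refine ⟨hw.1, fun x hx => ?_⟩
  rcases lt_or_eq_of_le (show ((n + 1 : ℕ) : ℤ) ≤ |x| by push_cast; omega) with h | h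
  · exact hw.2 x h
  · push_cast at h
    rcases abs_eq (by positivity) |>.mp h.symm with rfl | rfl
    · exact hfix
    · rw [hw.1, hfix]

def signedPerms (n : ℕ) : Subgroup (Equiv.Perm ℤ) where
  carrier := {w | IsSignedPerm n w}
  one_mem' := ⟨fun _ => rfl, fun _ _ => rfl⟩
  mul_mem' {w v} hw hv :=
    ⟨fun x => by simp only [Equiv.Perm.mul_apply, hv.1, hw.1],
     fun x hx => by simp only [Equiv.Perm.mul_apply, hv.2 x hx, hw.2 x hx]⟩
  inv_mem' {w} hw :=
    ⟨fun x => w.injective (by simp only [Equiv.Perm.inv_def, Equiv.apply_symm_apply, hw.1]),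
     fun x hx => w.injective (by simp only [Equiv.Perm.inv_def, Equiv.apply_symm_apply, hw.2 x hx])⟩

theorem finite_signedPerms (n : ℕ) : (signedPerms n : Set (Equiv.Perm ℤ)).Finite := by
  classical
  let p : ℤ → Prop := fun x => x ∈ Finset.Icc (-(n : ℤ)) n
  refine (Set.finite_range (Equiv.Perm.ofSubtype : Equiv.Perm (Subtype p) →* _)).subset ?_
  intro w (hw : IsSignedPerm n w)
  have hp : ∀ x, p (w x) ↔ p x := fun x => by
    simp only [p, Finset.mem_Icc, ← abs_le, hw.abs_apply_le_iff]
  refine ⟨w.subtypePerm hp, Equiv.Perm.ofSubtype_subtypePerm _ fun x hx => ?_⟩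
  by_contra h
  exact hx (hw.2 x (by simpa [p, ← abs_le] using h))

theorem phiB_eq_sum (j : ℕ) (hj : j ≠ 0) :
    phiB j = ∑ k ∈ (Finset.Icc (-(j : ℤ)) j).erase 0,
      MonoidAlgebra.of ℤ (Equiv.Perm ℤ) (bt k j) := by
  have hj' : (j : ℤ) ≠ 0 := by exact_mod_cast hj
  have hsplit : (Finset.Icc (-(j : ℤ)) j).erase 0
      = insert (j : ℤ) ((Finset.Icc (-(j : ℤ)) (j - 1)).erase 0) := by
    ext x
    simp only [Finset.mem_erase, Finset.mem_Icc, Finset.mem_insert]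
    omega
  rw [phiB, hsplit, Finset.sum_insert (by simp), bt_self hj', map_one]

section succ

variable {n : ℕ} {k : ℤ} {w v : Equiv.Perm ℤ}

theorem isSignedPerm_bt_succ (hk : k ≠ 0) (hkn : |k| ≤ n + 1) :
    IsSignedPerm (n + 1) (bt k (n + 1)) :=
  isSignedPerm_bt hk (by omega) (by push_cast; exact hkn)
    (by push_cast; rw [abs_of_nonneg (by omega)])

theorem inv_mul_bt_apply (hw : IsSignedPerm n w) (hk : k ≠ 0) :
    (w * bt k (n + 1))⁻¹ (n + 1) = k := by
  rw [Equiv.Perm.inv_eq_iff_eq, Equiv.Perm.mul_apply, bt_apply_left hk (by omega)]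
  exact (hw.2 _ (by rw [abs_of_nonneg (by omega : (0 : ℤ) ≤ n + 1)]; omega)).symm

theorem IsSignedPerm.inv_apply_ne_zero (hv : IsSignedPerm (n + 1) v) : v⁻¹ (n + 1) ≠ 0 := by
  rw [Ne, Equiv.Perm.inv_eq_iff_eq, hv.apply_zero]; omega

theorem IsSignedPerm.abs_inv_apply_le (hv : IsSignedPerm (n + 1) v) : |v⁻¹ (n + 1)| ≤ n + 1 := by
  have := ((signedPerms (n + 1)).inv_mem hv).abs_apply_le_iff (x := n + 1)
  push_cast at this
  exact this.2 (by rw [abs_of_nonneg (by omega)])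

theorem IsSignedPerm.mul_bt_inv_apply (hv : IsSignedPerm (n + 1) v) :
    IsSignedPerm n (v * bt (v⁻¹ (n + 1)) (n + 1)) := by
  refine IsSignedPerm.of_succ ((signedPerms (n + 1)).mul_mem hv
    (isSignedPerm_bt_succ hv.inv_apply_ne_zero hv.abs_inv_apply_le)) ?_
  rw [Equiv.Perm.mul_apply, bt_apply_right hv.inv_apply_ne_zero (by omega),
    Equiv.Perm.inv_def, Equiv.apply_symm_apply]

end succ

theorem sum_signedPerms_succ (n : ℕ) :
    ∑ v ∈ (finite_signedPerms (n + 1)).toFinset, MonoidAlgebra.of ℤ (Equiv.Perm ℤ) v =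
      (∑ w ∈ (finite_signedPerms n).toFinset, MonoidAlgebra.of ℤ (Equiv.Perm ℤ) w) *
        ∑ k ∈ (Finset.Icc (-(n + 1 : ℤ)) (n + 1)).erase 0,
          MonoidAlgebra.of ℤ (Equiv.Perm ℤ) (bt k (n + 1)) := by
  have hm : (n + 1 : ℤ) ≠ 0 := by omega
  simp only [Finset.sum_mul_sum, ← map_mul, ← Finset.sum_product']
  symm
  refine Finset.sum_nbij' (fun p => p.1 * bt p.2 (n + 1))
    (fun v => (v * bt (v⁻¹ (n + 1)) (n + 1), v⁻¹ (n + 1))) ?_ ?_ ?_ ?_ (fun _ _ => rfl)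
  all_goals simp only [Finset.mem_product, Set.Finite.mem_toFinset, SetLike.mem_coe,
    Finset.mem_erase, Finset.mem_Icc, ← abs_le, Prod.forall, Prod.mk.injEq]
  · rintro w k ⟨hw, hk, hkn⟩
    exact (signedPerms (n + 1)).mul_mem (hw.mono n.le_succ) (isSignedPerm_bt_succ hk hkn)
  · intro v hv
    exact ⟨hv.mul_bt_inv_apply, hv.inv_apply_ne_zero, hv.abs_inv_apply_le⟩
  · rintro w k ⟨hw, hk, -⟩
    rw [inv_mul_bt_apply hw hk, mul_assoc, bt_mul_self hk hm, mul_one]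
    exact ⟨rfl, rfl⟩
  · intro v hv
    rw [mul_assoc, bt_mul_self hv.inv_apply_ne_zero hm, mul_one]

theorem signedPerms_zero : signedPerms 0 = ⊥ := by
  refine (Subgroup.eq_bot_iff_forall _).2 fun w (hw : IsSignedPerm 0 w) => Equiv.ext fun x => ?_
  rcases eq_or_ne x 0 with rfl | hx
  · exact hw.apply_zero
  · exact hw.2 x (by simpa using hx)

theorem prod_phiB_eq_sum (n : ℕ) :
    ((List.range n).map fun j => phiB (j + 1)).prod =
      ∑ w ∈ (finite_signedPerms n).toFinset, MonoidAlgebra.of ℤ (Equiv.Perm ℤ) w := by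
  induction n with
  | zero =>
    have h : (finite_signedPerms 0).toFinset = {1} := by
      ext w; simp [signedPerms_zero]
    rw [h, Finset.sum_singleton, map_one, List.range_zero, List.map_nil, List.prod_nil]
  | succ n ih =>
    rw [List.range_succ, List.map_append, List.prod_append, ih, sum_signedPerms_succ,
      List.map_singleton, List.prod_singleton, phiB_eq_sum _ n.succ_ne_zero, Nat.cast_succ]

theorem phi_factorization_B_general (n : ℕ) :
    ((List.range n).map fun j => phiB (j + 1)).prod =
      ∑ᶠ w ∈ {w : Equiv.Perm ℤ | IsSignedPerm n w},
        MonoidAlgebra.of ℤ (Equiv.Perm ℤ) w :=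
  (prod_phiB_eq_sum n).trans (finsum_mem_eq_finite_toFinset_sum _ (finite_signedPerms n)).symm

/-- In `ℤ[B_n]` (`n ≥ 1`), `Φ_1 Φ_2 ⋯ Φ_n` equals the sum of all elements of `B_n`. -/
theorem phi_factorization_B (n : ℕ) (hn : 1 ≤ n) :
    ((List.range n).map fun j => phiB (j + 1)).prod =
      ∑ᶠ w ∈ {w : Equiv.Perm ℤ | IsSignedPerm n w},
        MonoidAlgebra.of ℤ (Equiv.Perm ℤ) w :=
  phi_factorization_B_general n
end
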